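/- arXiv:2501.05974 — 2 statements merged into one kernel-verified Lean document; each statement's English description precedes it below -/
import Mathlib

section
/- Let X be a metric space with locally finite Hausdorff n-measure and r > 0. Then the function g_r(x) = sup_{0 < s ≤ r} H^n(B(x,s)) / (ω_n s^n) is lower semicontinuous on X, and the function h_r(x) = inf_{0 < s ≤ r} H^n(B(x,s)) / (ω_n s^n) is upper semicontinuous on X. -/
open Metric MeasureTheory

/-- The volume of the Euclidean unit ball in `ℝ^n`. -/
noncomputable def omegaN (n : ℕ) : ENNReal :=
  volume (Metric.ball (0 : EuclideanSpace ℝ (Fin n)) 1)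

lemma omegaN_ne_zero (n : ℕ) : omegaN n ≠ 0 :=
  (measure_ball_pos _ _ one_pos).ne'

lemma omegaN_ne_top (n : ℕ) : omegaN n ≠ ⊤ :=
  measure_ball_lt_top.ne

lemma ball_eq_iUnion {X : Type} [MetricSpace X] (x : X) {s : ℝ} (hs : 0 < s) :
    Metric.ball x s = ⋃ k : ℕ, Metric.ball x (s - s / (k + 2)) := by
  ext y
  simp only [Set.mem_iUnion, mem_ball]
  constructor
  · intro hy
    have hds : 0 < s - dist y x := by linarith
    obtain ⟨k, hk⟩ := exists_nat_gt (s / (s - dist y x))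
    refine ⟨k, ?_⟩
    have h1 : s / ((k : ℝ) + 2) < s - dist y x := by
      rw [div_lt_iff₀ (by positivity)]
      calc s = (s / (s - dist y x)) * (s - dist y x) := by field_simp
        _ < (s - dist y x) * ((k : ℝ) + 2) := by
            rw [mul_comm]
            apply mul_lt_mul_of_pos_left _ hds
            linarith
    linarith
  · rintro ⟨k, hk⟩
    have : 0 < s / ((k : ℝ) + 2) := by positivity
    linarith

/-- For a metric space `X` with locally finite Hausdorff `n`-measure and `r > 0`, the
function `g_r(x) = sup_{0 < s ≤ r} H^n(B(x,s)) / (ω_n s^n)` is lower semicontinuous and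
the function `h_r(x) = inf_{0 < s ≤ r} H^n(B(x,s)) / (ω_n s^n)` is upper semicontinuous. -/
theorem density_ratio_semicontinuous
    (n : ℕ) (X : Type) [MetricSpace X] [MeasurableSpace X] [BorelSpace X]
    [IsLocallyFiniteMeasure (μH[n] : Measure X)]
    (r : ℝ) (hr : 0 < r) :
    LowerSemicontinuous (fun x : X => ⨆ (s : ℝ) (_ : 0 < s) (_ : s ≤ r),
      μH[n] (Metric.ball x s) / (omegaN n * ENNReal.ofReal (s ^ n))) ∧
    UpperSemicontinuous (fun x : X => ⨅ (s : ℝ) (_ : 0 < s) (_ : s ≤ r),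
      μH[n] (Metric.ball x s) / (omegaN n * ENNReal.ofReal (s ^ n))) := by
  have hD0 : ∀ s : ℝ, 0 < s → omegaN n * ENNReal.ofReal (s ^ n) ≠ 0 := fun s hs =>
    mul_ne_zero (omegaN_ne_zero n) (by
      simp only [ne_eq, ENNReal.ofReal_eq_zero, not_le]
      positivity)
  have hDtop : ∀ s : ℝ, omegaN n * ENNReal.ofReal (s ^ n) ≠ ⊤ :=
    fun s => ENNReal.mul_ne_top (omegaN_ne_top n) ENNReal.ofReal_ne_top
  constructor
  · -- Lower semicontinuity of the sup
    intro x t ht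
    simp only [lt_iSup_iff] at ht
    obtain ⟨s, hs0, hsr, hts⟩ := ht
    set D := omegaN n * ENNReal.ofReal (s ^ n) with hDdef
    have htD : t * D < μH[n] (Metric.ball x s) :=
      (ENNReal.lt_div_iff_mul_lt (Or.inl (hD0 s hs0)) (Or.inl (hDtop s))).mp hts
    -- find smaller radius s' with large measure
    have hmono : Monotone fun k : ℕ => Metric.ball x (s - s / (k + 2)) := by
      intro a b hab
      apply ball_subset_ball
      have : s / ((b : ℝ) + 2) ≤ s / ((a : ℝ) + 2) := by
        apply div_le_div_of_nonneg_left hs0.le (by positivity)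
        exact_mod_cast by omega
      linarith
    have hU : μH[n] (Metric.ball x s) = ⨆ k : ℕ, μH[n] (Metric.ball x (s - s / (k + 2))) := by
      rw [ball_eq_iUnion x hs0]
      exact (hmono.directed_le).measure_iUnion
    rw [hU] at htD
    rw [lt_iSup_iff] at htD
    obtain ⟨k, hk⟩ := htD
    set s' := s - s / ((k : ℝ) + 2) with hs'def
    have hs's : s' < s := by
      have : 0 < s / ((k : ℝ) + 2) := by positivity
      simp only [hs'def]; linarith
    filter_upwards [Metric.ball_mem_nhds x (by linarith : (0:ℝ) < s - s')] with y hy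
    have hsub : Metric.ball x s' ⊆ Metric.ball y s := by
      intro z hz
      simp only [mem_ball] at hz hy ⊢
      have := dist_triangle z x y
      rw [dist_comm x y] at this
      linarith
    have hy' : t * D < μH[n] (Metric.ball y s) := lt_of_lt_of_le hk (measure_mono hsub)
    have : t < μH[n] (Metric.ball y s) / D :=
      (ENNReal.lt_div_iff_mul_lt (Or.inl (hD0 s hs0)) (Or.inl (hDtop s))).mpr hy'
    calc t < μH[n] (Metric.ball y s) / D := this
      _ ≤ ⨆ (s : ℝ) (_ : 0 < s) (_ : s ≤ r),
          μH[n] (Metric.ball y s) / (omegaN n * ENNReal.ofReal (s ^ n)) := by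
        refine le_iSup_of_le s ?_
        rw [iSup_pos hs0, iSup_pos hsr]
  · -- Upper semicontinuity of the inf
    intro x t ht
    have hinf : ∃ s : ℝ, 0 < s ∧ s ≤ r ∧
        μH[n] (Metric.ball x s) / (omegaN n * ENNReal.ofReal (s ^ n)) < t := by
      by_contra h
      push_neg at h
      exact absurd (le_iInf fun s => le_iInf fun hs0 => le_iInf fun hsr => h s hs0 hsr)
        (not_le.mpr ht)
    obtain ⟨s, hs0, hsr, hst⟩ := hinf
    set A := μH[n] (Metric.ball x s) with hA
    have hAt : A < t * (omegaN n * ENNReal.ofReal (s ^ n)) :=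
      (ENNReal.div_lt_iff (Or.inl (hD0 s hs0)) (Or.inl (hDtop s))).mp hst
    -- find s' < s with A < t * (ω * (s')^n)
    have hcont : Filter.Tendsto (fun u : ℝ => t * (omegaN n * ENNReal.ofReal (u ^ n)))
        (nhds s) (nhds (t * (omegaN n * ENNReal.ofReal (s ^ n)))) := by
      apply ENNReal.Tendsto.const_mul
      · apply ENNReal.Tendsto.const_mul
        · exact (ENNReal.continuous_ofReal.tendsto _).comp
            ((continuous_pow n).tendsto s)
        · left
          simp only [ne_eq, ENNReal.ofReal_eq_zero, not_le]
          positivity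
      · left; exact hD0 s hs0
    have hev : ∀ᶠ u in nhds s, A < t * (omegaN n * ENNReal.ofReal (u ^ n)) :=
      hcont.eventually (eventually_gt_nhds hAt)
    have h0ev : ∀ᶠ u in nhds s, (0:ℝ) < u := eventually_gt_nhds hs0
    obtain ⟨s', ⟨hAs', hs'0⟩, hs's⟩ :=
      (((hev.and h0ev).filter_mono (nhdsWithin_le_nhds (s := Set.Iio s))).and
        eventually_mem_nhdsWithin).exists
    rw [Set.mem_Iio] at hs's
    have hδ : (0:ℝ) < (s - s') / 2 := by linarith
    filter_upwards [Metric.ball_mem_nhds x hδ] with y hy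
    rw [mem_ball] at hy
    set d := dist y x with hd
    have hd0 : 0 ≤ d := dist_nonneg
    have hs''0 : 0 < s' + d := by linarith
    have hs''r : s' + d ≤ r := by linarith
    have hsub : Metric.ball y (s' + d) ⊆ Metric.ball x s := by
      intro z hz
      rw [mem_ball] at hz ⊢
      have := dist_triangle z y x
      linarith
    calc (⨅ (u : ℝ) (_ : 0 < u) (_ : u ≤ r),
          μH[n] (Metric.ball y u) / (omegaN n * ENNReal.ofReal (u ^ n)))
        ≤ μH[n] (Metric.ball y (s' + d)) / (omegaN n * ENNReal.ofReal ((s' + d) ^ n)) := by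
          refine iInf_le_of_le (s' + d) ?_
          rw [iInf_pos hs''0, iInf_pos hs''r]
      _ ≤ A / (omegaN n * ENNReal.ofReal (s' ^ n)) :=
          ENNReal.div_le_div (measure_mono hsub)
            (mul_le_mul_right (ENNReal.ofReal_le_ofReal
              (pow_le_pow_left₀ hs'0.le (by linarith) n)) _)
      _ < t := (ENNReal.div_lt_iff (Or.inl (hD0 s' hs'0)) (Or.inl (hDtop s'))).mpr hAs'
end

section
/- Let X be a metric space homeomorphic to a closed, oriented smooth n-manifold in which every porous set has H^n-measure zero, let L ≥ 1, let f : X → R^n be Lipschitz, and let C ⊂ X be a compact set on which f is L-bi-Lipschitz. Then for H^n-almost every x ∈ C there exists r > 0 such that for every z ∈ B(x, r) one has d(f(x), f(z)) ≥ (7/(9L))·d(x, z); in particular f(z) ≠ f(x) for all z ∈ B(x,r) \ {x}. -/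
open Metric MeasureTheory Manifold CategoryTheory

/-! ### Singular homology, fundamental classes and degree

Singular homology with integer coefficients, built as the homology of the
alternating-face-map complex of the free simplicial abelian group on the
singular simplicial set. -/

/-- The singular chain complex functor (with `ℤ` coefficients). -/
noncomputable def singularChains : TopCat ⥤ ChainComplex AddCommGrpCat ℕ :=
  TopCat.toSSet ⋙ ((SimplicialObject.whiskering _ _).obj AddCommGrpCat.free) ⋙
    AlgebraicTopology.alternatingFaceMapComplex AddCommGrpCat

/-- The `n`-th singular homology functor (with `ℤ` coefficients). -/
noncomputable def singularHomologyFunctor (n : ℕ) : TopCat ⥤ AddCommGrpCat :=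
  singularChains ⋙ HomologicalComplex.homologyFunctor _ _ n

/-- The `n`-th singular homology group `H_n(X; ℤ)` of a topological space. -/
noncomputable def SHom (n : ℕ) (X : Type) [TopologicalSpace X] : AddCommGrpCat :=
  (singularHomologyFunctor n).obj (TopCat.of X)

/-- The homomorphism induced on singular homology by a continuous map. -/
noncomputable def SHomMap (n : ℕ) {X Y : Type} [TopologicalSpace X] [TopologicalSpace Y]
    (f : C(X, Y)) : SHom n X ⟶ SHom n Y :=
  (singularHomologyFunctor n).map (TopCat.ofHom f : TopCat.of X ⟶ TopCat.of Y)

/-- `ζ` is a fundamental class of `X` in degree `n`: it generates `H_n(X; ℤ)` and has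
infinite order, i.e. it witnesses `H_n(X; ℤ) ≅ ℤ`.  For a closed connected topological
`n`-manifold, such a class exists iff the manifold is orientable, and the choice of such a
generator is exactly the choice of an orientation. -/
def IsFundamentalClass (n : ℕ) (X : Type) [TopologicalSpace X] (ζ : SHom n X) : Prop :=
  (AddSubgroup.zmultiples ζ = ⊤) ∧ ∀ m : ℤ, m • ζ = 0 → m = 0
/-- A set `A` in a metric space is porous if for each `x ∈ A` there exist `ε > 0` and a
sequence `x_k → x` with `d(x_k, A) ≥ ε · d(x_k, x)` for every `k`. -/
def IsPorous {X : Type*} [MetricSpace X] (A : Set X) : Prop :=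
  ∀ x ∈ A, ∃ ε : ℝ, 0 < ε ∧ ∃ u : ℕ → X,
    Filter.Tendsto u Filter.atTop (nhds x) ∧ ∀ k, ε * dist (u k) x ≤ Metric.infDist (u k) A

/-!
The points of `C` at which `C` has holes of relative size `ε` at arbitrarily small scales form
a porous set, hence an `H^n`-null one. At any other `x ∈ C`, each nearby `z` lies within
`ε · d(x, z)` of some `z' ∈ C`; the bi-Lipschitz bound for the pair `(x, z')` and the Lipschitz
bound for `(z', z)` give `d(x, z) ≤ L · d(f x, f z) + ε (1 + K L) · d(x, z)`, and the choice
`ε = 2 / (9 (1 + K L))` leaves the constant `7 / (9 L)`.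
-/

open Filter Topology

section Porosity

variable {X : Type*} [MetricSpace X] {C : Set X} {ε : ℝ}

def holePoints (C : Set X) (ε : ℝ) : Set X :=
  ⋂ k : ℕ, {x | ∃ z, dist z x < 1 / ((k : ℝ) + 1) ∧ ε * dist z x < infDist z C}

lemma isOpen_setOf_exists_hole (C : Set X) (ε δ : ℝ) :
    IsOpen {x | ∃ z, dist z x < δ ∧ ε * dist z x < infDist z C} := by
  simp only [Set.ofPred_exists, Set.ofPred_and]
  exact isOpen_iUnion fun z =>
    (isOpen_lt (continuous_const.dist continuous_id) continuous_const).inter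
      (isOpen_lt (continuous_const.mul (continuous_const.dist continuous_id)) continuous_const)

lemma measurableSet_holePoints [MeasurableSpace X] [OpensMeasurableSpace X] (C : Set X)
    (ε : ℝ) : MeasurableSet (holePoints C ε) :=
  MeasurableSet.iInter fun _ => (isOpen_setOf_exists_hole C ε _).measurableSet

lemma isPorous_inter_holePoints (hε : 0 < ε) : IsPorous (C ∩ holePoints C ε) := by
  intro x hx
  have hholes := hx.2
  simp only [holePoints, Set.mem_iInter, Set.mem_ofPred_eq] at hholes
  choose u hu_dist hu_hole using hholes
  refine ⟨ε, hε, u, ?_, fun k => (hu_hole k).le.trans ?_⟩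
  · rw [tendsto_iff_dist_tendsto_zero]
    exact squeeze_zero (fun _ => dist_nonneg) (fun k => (hu_dist k).le)
      tendsto_one_div_add_atTop_nhds_zero_nat
  · exact infDist_le_infDist_of_subset Set.inter_subset_left ⟨x, hx⟩

lemma exists_ball_infDist_le_of_notMem_holePoints {x : X} (hx : x ∉ holePoints C ε) :
    ∃ r > 0, ∀ z ∈ ball x r, infDist z C ≤ ε * dist z x := by
  simp only [holePoints, Set.mem_iInter, Set.mem_ofPred_eq, not_forall, not_exists, not_and,
    not_lt] at hx
  obtain ⟨k, hk⟩ := hx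
  exact ⟨1 / ((k : ℝ) + 1), by positivity, fun z hz => hk z hz⟩

lemma ae_exists_ball_infDist_le [MeasurableSpace X] [OpensMeasurableSpace X] {μ : Measure X}
    (hμ : ∀ A, MeasurableSet A → IsPorous A → μ A = 0) (hC : MeasurableSet C) (hε : 0 < ε) :
    ∀ᵐ x ∂μ.restrict C, ∃ r > 0, ∀ z ∈ ball x r, infDist z C ≤ ε * dist z x := by
  have hnull : μ (C ∩ holePoints C ε) = 0 :=
    hμ _ (hC.inter (measurableSet_holePoints C ε)) (isPorous_inter_holePoints hε)
  rw [ae_restrict_iff' hC]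
  filter_upwards [measure_eq_zero_iff_ae_notMem.mp hnull] with x hx hxC
  exact exists_ball_infDist_le_of_notMem_holePoints fun hholes => hx ⟨hxC, hholes⟩

end Porosity

section Expansion

variable {X Y : Type*} [MetricSpace X] [MetricSpace Y] {f : X → Y} {K : NNReal} {L ε : ℝ}
  {C : Set X} {x z : X}

lemma mul_dist_le_of_dist_le_mul_dist {z' : X} (hf : LipschitzWith K f) (hL : 0 ≤ L)
    (hx : dist x z' ≤ L * dist (f x) (f z')) (hz : dist z z' ≤ ε * dist x z) :
    (1 - ε * (1 + K * L)) * dist x z ≤ L * dist (f x) (f z) := by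
  have hf' : dist (f x) (f z') ≤ dist (f x) (f z) + K * dist z z' :=
    (dist_triangle _ (f z) _).trans (add_le_add_right (hf.dist_le_mul z z') _)
  have : dist x z ≤ L * dist (f x) (f z) + (1 + K * L) * (ε * dist x z) :=
    calc dist x z ≤ dist x z' + dist z z' := dist_triangle_right x z z'
      _ ≤ L * (dist (f x) (f z) + K * dist z z') + dist z z' := by
        gcongr; exact hx.trans (mul_le_mul_of_nonneg_left hf' hL)
      _ = L * dist (f x) (f z) + (1 + K * L) * dist z z' := by ring
      _ ≤ L * dist (f x) (f z) + (1 + K * L) * (ε * dist x z) := by gcongr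
  linarith

lemma mul_dist_le_of_infDist_le (hf : LipschitzWith K f) (hL : 0 < L) (hC : IsCompact C)
    (hx : x ∈ C) (hbil : ∀ y ∈ C, dist x y / L ≤ dist (f x) (f y))
    (hz : infDist z C ≤ ε * dist z x) :
    (1 - ε * (1 + K * L)) * dist x z ≤ L * dist (f x) (f z) := by
  obtain ⟨z', hz'C, hzz'⟩ := hC.exists_infDist_eq_dist ⟨x, hx⟩ z
  refine mul_dist_le_of_dist_le_mul_dist (z' := z') hf hL.le ?_ ?_
  · rw [← div_le_iff₀' hL]; exact hbil z' hz'C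
  · rw [← hzz', dist_comm x z]; exact hz

end Expansion

theorem expansion_near_bilipschitz_pieces_general
    (n : ℕ)
    (X : Type) [MetricSpace X] [MeasurableSpace X] [BorelSpace X]
    -- porous sets in `X` are `H^n`-null:
    (hporous : ∀ A : Set X, MeasurableSet A → IsPorous A → μH[n] A = 0)
    (L : ℝ) (hL : 1 ≤ L)
    -- `f` is Lipschitz:
    (f : X → EuclideanSpace ℝ (Fin n)) (hf : ∃ K : NNReal, LipschitzWith K f)
    -- `C` is compact and `f` is `L`-bi-Lipschitz on `C`:
    (C : Set X) (hC : IsCompact C)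
    (hbil : ∀ x ∈ C, ∀ y ∈ C,
      dist x y / L ≤ dist (f x) (f y) ∧ dist (f x) (f y) ≤ L * dist x y) :
    ∀ᵐ x ∂((μH[n] : Measure X).restrict C),
      ∃ r : ℝ, 0 < r ∧
        (∀ z ∈ Metric.ball x r, 7 / (9 * L) * dist x z ≤ dist (f x) (f z)) ∧
        ∀ z ∈ Metric.ball x r, z ≠ x → f z ≠ f x := by
  obtain ⟨K, hK⟩ := hf
  have hL0 : 0 < L := one_pos.trans_le hL
  have hε : 0 < 2 / (9 * (1 + K * L)) := by positivity
  have hconst : 1 - 2 / (9 * (1 + K * L)) * (1 + K * L) = 7 / 9 := by field_simp; ring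
  have hCm := hC.isClosed.measurableSet
  filter_upwards [ae_exists_ball_infDist_le hporous hCm hε, ae_restrict_mem hCm]
    with x ⟨r, hr, hnear⟩ hxC
  have hexp : ∀ z ∈ ball x r, 7 / (9 * L) * dist x z ≤ dist (f x) (f z) := fun z hz => by
    have := mul_dist_le_of_infDist_le hK hL0 hC hxC (fun y hy => (hbil x hxC y hy).1)
      (hnear z hz)
    rw [hconst] at this
    rw [div_mul_eq_mul_div, div_le_iff₀ (by positivity)]
    linarith
  refine ⟨r, hr, hexp, fun z hz hzx hfz => ?_⟩
  have hpos : 0 < 7 / (9 * L) * dist x z := by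
    have := dist_pos.mpr (Ne.symm hzx); positivity
  linarith [hexp z hz, dist_self (f x), congrArg (dist (f x)) hfz]

/-- Let `X` be a metric space homeomorphic to a closed oriented smooth `n`-manifold in
which porous sets are `H^n`-null, let `L ≥ 1`, let `f : X → ℝ^n` be Lipschitz and let
`C ⊆ X` be a compact set on which `f` is `L`-bi-Lipschitz. Then for `H^n`-a.e. `x ∈ C`
there is `r > 0` with `d(f(x), f(z)) ≥ (7/(9L))·d(x,z)` for all `z ∈ B(x,r)`; in
particular `f z ≠ f x` for `z ∈ B(x,r) \ {x}`. -/
theorem expansion_near_bilipschitz_pieces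
    (n : ℕ)
    -- `X` is a metric space homeomorphic to a closed, oriented smooth `n`-manifold `N`:
    (X : Type) [MetricSpace X] [MeasurableSpace X] [BorelSpace X]
    (N : Type) [TopologicalSpace N] [ChartedSpace (EuclideanSpace ℝ (Fin n)) N]
    [IsManifold (𝓡 n) (⊤ : ℕ∞) N] [CompactSpace N]
    (e : X ≃ₜ N)
    (ζX : SHom n X) (hζX : IsFundamentalClass n X ζX)
    -- porous sets in `X` are `H^n`-null:
    (hporous : ∀ A : Set X, MeasurableSet A → IsPorous A → μH[n] A = 0)
    (L : ℝ) (hL : 1 ≤ L)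
    -- `f` is Lipschitz:
    (f : X → EuclideanSpace ℝ (Fin n)) (hf : ∃ K : NNReal, LipschitzWith K f)
    -- `C` is compact and `f` is `L`-bi-Lipschitz on `C`:
    (C : Set X) (hC : IsCompact C)
    (hbil : ∀ x ∈ C, ∀ y ∈ C,
      dist x y / L ≤ dist (f x) (f y) ∧ dist (f x) (f y) ≤ L * dist x y) :
    ∀ᵐ x ∂((μH[n] : Measure X).restrict C),
      ∃ r : ℝ, 0 < r ∧
        (∀ z ∈ Metric.ball x r, 7 / (9 * L) * dist x z ≤ dist (f x) (f z)) ∧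
        ∀ z ∈ Metric.ball x r, z ≠ x → f z ≠ f x :=
  expansion_near_bilipschitz_pieces_general n X hporous L hL f hf C hC hbil
end
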